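/- arXiv:2001.03993 — 5 statements merged into one kernel-verified Lean document; each statement's English description precedes it below -/
import Mathlib

section
/- For every p ∈ ℝ³, the function k ↦ (‖k‖² (1+‖p+k‖²))^{-1} is integrable on ℝ³ and ∫_{ℝ³} (‖k‖² (1+‖p+k‖²))^{-1} dk ≤ ∫_{ℝ³} (‖k‖² (1+‖k‖²))^{-1} dk = 2π². In particular, sup_{p ∈ ℝ³} ∫_{ℝ³} (‖k‖² (1+‖p+k‖²))^{-1} dk = 2π² < ∞. -/
open MeasureTheory Real

noncomputable section

abbrev E3 := EuclideanSpace ℝ (Fin 3)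

/-!
Applying the layer-cake formula twice gives
`∫ f(k) g(p + k) dk = ∫∫ |{f > s} ∩ {g(p + ·) > t}| ds dt`.
When `f` and `g` are radially nonincreasing, their superlevel sets are nested up to the origin,
so the intersection has measure at most the smaller of `|{f > s}|` and `|{g > t}|`, which is
exactly its measure at `p = 0`: a translation can only decrease the integral (the simplest case
of the Riesz rearrangement inequality). At `p = 0` polar coordinates give
`4π ∫₀^∞ r² (r² (1 + r²))⁻¹ dr = 4π · π/2 = 2π²`.
-/

open Set Filter

lemma lintegral_ofReal_mul_eq_lintegral_measure_inter {α : Type*} [MeasurableSpace α]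
    {μ : Measure α} {f g : α → ℝ} (hf₀ : 0 ≤ f) (hg₀ : 0 ≤ g) (hf : Measurable f)
    (hg : Measurable g) :
    ∫⁻ a, ENNReal.ofReal (f a * g a) ∂μ =
      ∫⁻ t in Ioi 0, ∫⁻ s in Ioi 0, μ ({a | s < f a} ∩ {a | t < g a}) := by
  have hdensity : ∫⁻ a, ENNReal.ofReal (f a * g a) ∂μ =
      ∫⁻ a, ENNReal.ofReal (g a) ∂μ.withDensity fun a => ENNReal.ofReal (f a) := by
    rw [lintegral_withDensity_eq_lintegral_mul _ hf.ennreal_ofReal hg.ennreal_ofReal]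
    simp only [Pi.mul_apply, ENNReal.ofReal_mul (hf₀ _)]
  rw [hdensity, lintegral_eq_lintegral_meas_lt _ (.of_forall hg₀) hg.aemeasurable]
  refine setLIntegral_congr_fun measurableSet_Ioi fun t _ => ?_
  rw [withDensity_apply _ (measurableSet_lt measurable_const hg),
    lintegral_eq_lintegral_meas_lt _ (.of_forall hf₀) hf.aemeasurable]
  simp only [Measure.restrict_apply (measurableSet_lt measurable_const hf)]

section Rearrangement

variable {G : Type*} [AddGroup G] [MeasurableSpace G] [MeasurableAdd G] {μ : Measure G}
  [μ.IsAddLeftInvariant]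

lemma measure_inter_preimage_add_le {A B : Set G}
    (hAB : A ≤ᵐ[μ] B ∨ B ≤ᵐ[μ] A) (x : G) :
    μ (A ∩ (fun a => x + a) ⁻¹' B) ≤ μ (A ∩ B) := by
  rcases hAB with hAB | hBA
  · calc μ (A ∩ (fun a => x + a) ⁻¹' B) ≤ μ A := measure_mono inter_subset_left
      _ ≤ μ (A ∩ B) :=
        measure_mono_ae (by simpa using ae_le_set_inter (EventuallyLE.refl _ A) hAB)
  · calc μ (A ∩ (fun a => x + a) ⁻¹' B) ≤ μ ((fun a => x + a) ⁻¹' B) :=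
          measure_mono inter_subset_right
      _ = μ B := measure_preimage_add μ x B
      _ ≤ μ (A ∩ B) :=
        measure_mono_ae (by simpa using ae_le_set_inter hBA (EventuallyLE.refl _ B))

variable {f g : G → ℝ}

theorem lintegral_ofReal_mul_translate_le (hf₀ : 0 ≤ f) (hg₀ : 0 ≤ g) (hf : Measurable f)
    (hg : Measurable g)
    (hfg : ∀ s t : ℝ, {a | s < f a} ≤ᵐ[μ] {a | t < g a} ∨ {a | t < g a} ≤ᵐ[μ] {a | s < f a})
    (x : G) :
    ∫⁻ a, ENNReal.ofReal (f a * g (x + a)) ∂μ ≤ ∫⁻ a, ENNReal.ofReal (f a * g a) ∂μ := by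
  rw [lintegral_ofReal_mul_eq_lintegral_measure_inter (g := fun a => g (x + a)) hf₀
      (fun a => hg₀ (x + a)) hf (hg.comp (measurable_const_add x)),
    lintegral_ofReal_mul_eq_lintegral_measure_inter hf₀ hg₀ hf hg]
  exact lintegral_mono fun t => lintegral_mono fun s => measure_inter_preimage_add_le (hfg s t) x

theorem integral_mul_translate_le (hf₀ : 0 ≤ f) (hg₀ : 0 ≤ g) (hf : Measurable f)
    (hg : Measurable g)
    (hfg : ∀ s t : ℝ, {a | s < f a} ≤ᵐ[μ] {a | t < g a} ∨ {a | t < g a} ≤ᵐ[μ] {a | s < f a})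
    (hint : Integrable (fun a => f a * g a) μ) (x : G) :
    Integrable (fun a => f a * g (x + a)) μ ∧
      ∫ a, f a * g (x + a) ∂μ ≤ ∫ a, f a * g a ∂μ := by
  have hle := lintegral_ofReal_mul_translate_le hf₀ hg₀ hf hg hfg x
  have hfin := hint.lintegral_lt_top
  have hnonneg : 0 ≤ᵐ[μ] fun a => f a * g (x + a) :=
    .of_forall fun a => mul_nonneg (hf₀ a) (hg₀ _)
  have hmeas : AEStronglyMeasurable (fun a => f a * g (x + a)) μ :=
    (hf.mul (hg.comp (measurable_const_add x))).aestronglyMeasurable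
  refine ⟨⟨hmeas, (hasFiniteIntegral_iff_ofReal hnonneg).2 (hle.trans_lt hfin)⟩, ?_⟩
  rw [integral_eq_lintegral_of_nonneg_ae hnonneg hmeas,
    integral_eq_lintegral_of_nonneg_ae (.of_forall fun a => mul_nonneg (hf₀ a) (hg₀ a))
      hint.aestronglyMeasurable]
  exact ENNReal.toReal_mono hfin.ne hle

end Rearrangement

/-- Only required away from the origin, so that `(‖x‖ ^ 2)⁻¹`, whose junk value at `0` is `0`,
qualifies. -/
def RadiallyAntitone {E : Type*} [Zero E] [Norm E] (f : E → ℝ) : Prop :=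
  ∀ ⦃x y : E⦄, x ≠ 0 → ‖x‖ ≤ ‖y‖ → f y ≤ f x

lemma RadiallyAntitone.superlevel_ae_le_total {E : Type*} [Zero E] [Norm E] [MeasurableSpace E]
    {μ : Measure E} [NullSingletonClass μ] {f g : E → ℝ} (hf : RadiallyAntitone f)
    (hg : RadiallyAntitone g) (s t : ℝ) :
    {a | s < f a} ≤ᵐ[μ] {a | t < g a} ∨ {a | t < g a} ≤ᵐ[μ] {a | s < f a} := by
  have hsub : {a | s < f a} \ {a | t < g a} ⊆ {0} ∨ {a | t < g a} \ {a | s < f a} ⊆ {0} := by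
    by_contra h
    simp only [not_or, not_subset] at h
    obtain ⟨⟨a, ⟨haf, hag⟩, ha⟩, ⟨b, ⟨hbg, hbf⟩, hb⟩⟩ := h
    rcases le_total ‖a‖ ‖b‖ with hab | hba
    · exact hag (hbg.trans_le (hg ha hab))
    · exact hbf (haf.trans_le (hf hb hba))
  exact hsub.imp (fun h => ae_le_set.2 (measure_mono_null h (measure_singleton 0)))
    (fun h => ae_le_set.2 (measure_mono_null h (measure_singleton 0)))

lemma radiallyAntitone_inv_norm_sq {E : Type*} [NormedAddCommGroup E] :
    RadiallyAntitone fun x : E => (‖x‖ ^ 2)⁻¹ := fun x y hx hxy => by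
  have : 0 < ‖x‖ := norm_pos_iff.2 hx
  dsimp only
  gcongr

lemma radiallyAntitone_inv_one_add_norm_sq {E : Type*} [NormedAddCommGroup E] :
    RadiallyAntitone fun x : E => (1 + ‖x‖ ^ 2)⁻¹ := fun x y _ hxy => by
  dsimp only
  gcongr

lemma integral_inv_norm_sq_mul_one_add_norm_sq :
    ∫ k : E3, (‖k‖ ^ 2 * (1 + ‖k‖ ^ 2))⁻¹ = 2 * π ^ 2 := by
  have hradial : ∀ r ∈ Ioi (0 : ℝ), r ^ 2 • (r ^ 2 * (1 + r ^ 2))⁻¹ = (1 + r ^ 2)⁻¹ :=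
    fun r hr => by
      have : r ≠ 0 := (mem_Ioi.1 hr).ne'
      rw [smul_eq_mul]; field_simp
  rw [integral_fun_norm_addHaar volume fun r => (r ^ 2 * (1 + r ^ 2))⁻¹,
    finrank_euclideanSpace_fin, Nat.add_one_sub_one,
    setIntegral_congr_fun measurableSet_Ioi hradial, integral_Ioi_inv_one_add_sq,
    measureReal_def, EuclideanSpace.volume_ball_fin_three]
  simp only [ENNReal.ofReal_one, one_pow, one_mul, arctan_zero, sub_zero, smul_eq_mul,
    nsmul_eq_mul, Nat.cast_ofNat]
  rw [ENNReal.toReal_ofReal (by positivity)]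
  ring

/-- For every `p ∈ ℝ³`, `k ↦ (‖k‖²(1+‖p+k‖²))⁻¹` is integrable with integral at most
`∫ (‖k‖²(1+‖k‖²))⁻¹ dk = 2π²`; in particular the supremum over `p` equals `2π² < ∞`. -/
theorem stmt3 :
    (∀ p : E3, Integrable (fun k : E3 => (‖k‖ ^ 2 * (1 + ‖p + k‖ ^ 2))⁻¹)) ∧
    (∫ k : E3, (‖k‖ ^ 2 * (1 + ‖k‖ ^ 2))⁻¹) = 2 * π ^ 2 ∧
    (∀ p : E3, (∫ k : E3, (‖k‖ ^ 2 * (1 + ‖p + k‖ ^ 2))⁻¹) ≤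
      ∫ k : E3, (‖k‖ ^ 2 * (1 + ‖k‖ ^ 2))⁻¹) ∧
    (⨆ p : E3, ∫ k : E3, (‖k‖ ^ 2 * (1 + ‖p + k‖ ^ 2))⁻¹) = 2 * π ^ 2 := by
  have hI₀ := integral_inv_norm_sq_mul_one_add_norm_sq
  simp_rw [mul_inv] at hI₀ ⊢
  have hcompare (p : E3) :=
    integral_mul_translate_le (f := fun k : E3 => (‖k‖ ^ 2)⁻¹)
      (g := fun k : E3 => (1 + ‖k‖ ^ 2)⁻¹) (fun _ => by positivity) (fun _ => by positivity)
      (by fun_prop) (by fun_prop)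
      (RadiallyAntitone.superlevel_ae_le_total radiallyAntitone_inv_norm_sq
        radiallyAntitone_inv_one_add_norm_sq)
      (.of_integral_ne_zero (by rw [hI₀]; positivity)) p
  refine ⟨fun p => (hcompare p).1, hI₀, fun p => (hcompare p).2, ?_⟩
  have hbdd : BddAbove (range fun p : E3 => ∫ k : E3, (‖k‖ ^ 2)⁻¹ * (1 + ‖p + k‖ ^ 2)⁻¹) :=
    ⟨_, forall_mem_range.2 fun p => (hcompare p).2⟩
  refine le_antisymm (ciSup_le fun p => (hcompare p).2.trans hI₀.le) ?_
  simpa [hI₀] using le_ciSup hbdd 0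
end
end

section
/- For every K > 0 and every h ∈ ℝ³, one has ∫_{{k ∈ ℝ³ : ‖k‖ ≥ K}} ((1+‖k‖²)(1+‖h-k‖²))^{-1} dk ≤ 2 π^{3/2} K^{-1/2}. In particular, the quantity C̃_K = sup_{h ∈ ℝ³} ∫_{{‖k‖ ≥ K}} ((1+‖k‖²)(1+‖h-k‖²))^{-1} dk tends to 0 as K → ∞. -/
open MeasureTheory Real Filter

noncomputable section

/-! By Cauchy–Schwarz on `{‖k‖ ≥ K}`, the integral is at most the product of the `L²` norms of
`(1 + ‖k‖²)⁻¹` and `(1 + ‖h - k‖²)⁻¹` there. In polar coordinates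
`∫_{ℝ³} (1 + ‖k‖²)⁻² dk = 4π ∫_0^∞ r² (1 + r²)⁻² dr = π²`, and over `r ≥ K` the bound
`r² (1 + r²)⁻² ≤ r⁻²` gives `4π / K`; by translation invariance the second factor is at most `π²`.
The resulting bound `2 π^{3/2} K^{-1/2}` does not depend on `h`, so the supremum tends to `0`. -/

open Set Topology Module

theorem integral_mul_le_sqrt_mul_sqrt {α : Type*} [MeasurableSpace α] {μ : Measure α}
    {f g : α → ℝ} (hf : MemLp f 2 μ) (hg : MemLp g 2 μ) :
    ∫ a, f a * g a ∂μ ≤ √(∫ a, f a ^ 2 ∂μ) * √(∫ a, g a ^ 2 ∂μ) := by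
  have hpq : (2 : ℝ).HolderConjugate 2 := Real.holderConjugate_iff.mpr ⟨one_lt_two, by norm_num⟩
  have holder := integral_mul_norm_le_Lp_mul_Lq (μ := μ) (f := f) (g := g) hpq
    (by rwa [ENNReal.ofReal_ofNat]) (by rwa [ENNReal.ofReal_ofNat])
  simp only [rpow_two, norm_eq_abs, sq_abs, ← sqrt_eq_rpow] at holder
  refine le_trans (integral_mono (hf.integrable_mul hg) ?_ fun a => ?_) holder
  · exact (hf.norm.integrable_mul hg.norm).congr (.of_forall fun a => by simp)
  · exact (le_abs_self _).trans_eq (abs_mul _ _)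

theorem hasDerivAt_arctan_sub_div_one_add_sq_div_two (x : ℝ) :
    HasDerivAt (fun r : ℝ => (arctan r - r / (1 + r ^ 2)) / 2)
      (x ^ 2 * ((1 + x ^ 2)⁻¹) ^ 2) x := by
  have hx : (1 : ℝ) + x ^ 2 ≠ 0 := by positivity
  have h := ((hasDerivAt_arctan x).sub
    ((hasDerivAt_id x).div ((hasDerivAt_pow 2 x).const_add 1) hx)).div_const 2
  refine h.congr_deriv ?_
  simp only [id]
  field_simp
  ring

theorem tendsto_arctan_sub_div_one_add_sq_div_two :
    Tendsto (fun r : ℝ => (arctan r - r / (1 + r ^ 2)) / 2) atTop (𝓝 (π / 4)) := by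
  have hquot : Tendsto (fun r : ℝ => r / (1 + r ^ 2)) atTop (𝓝 0) := by
    have h := (tendsto_inv_atTop_zero.add_atTop (tendsto_id (α := ℝ))).inv_tendsto_atTop
    refine h.congr' ?_
    filter_upwards [eventually_gt_atTop (0 : ℝ)] with r hr
    simp only [Pi.inv_apply, id]
    field_simp
  have h := ((tendsto_arctan_atTop.mono_right nhdsWithin_le_nhds).sub hquot).div_const 2
  convert h using 2
  ring

theorem integrableOn_Ioi_sq_mul_inv_one_add_sq_sq :
    IntegrableOn (fun r : ℝ => r ^ 2 * ((1 + r ^ 2)⁻¹) ^ 2) (Ioi 0) :=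
  integrableOn_Ioi_deriv_of_nonneg' (fun x _ => hasDerivAt_arctan_sub_div_one_add_sq_div_two x)
    (fun x _ => by positivity) tendsto_arctan_sub_div_one_add_sq_div_two

theorem integral_Ioi_sq_mul_inv_one_add_sq_sq :
    ∫ r in Ioi (0 : ℝ), r ^ 2 * ((1 + r ^ 2)⁻¹) ^ 2 = π / 4 := by
  simpa using integral_Ioi_of_hasDerivAt_of_nonneg' (a := 0)
    (fun x _ => hasDerivAt_arctan_sub_div_one_add_sq_div_two x) (fun x _ => by positivity)
    tendsto_arctan_sub_div_one_add_sq_div_two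

theorem integral_Ioi_sq_mul_inv_one_add_sq_sq_le {K : ℝ} (hK : 0 < K) :
    ∫ r in Ioi K, r ^ 2 * ((1 + r ^ 2)⁻¹) ^ 2 ≤ K⁻¹ := by
  have hpow : ∫ r in Ioi K, r ^ (-2 : ℝ) = K⁻¹ := by
    rw [integral_Ioi_rpow_of_lt (by norm_num) hK, show (-2 : ℝ) + 1 = -1 by norm_num,
      rpow_neg_one]
    ring
  refine hpow ▸ setIntegral_mono_on
    (integrableOn_Ioi_sq_mul_inv_one_add_sq_sq.mono_set (Ioi_subset_Ioi hK.le))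
    (integrableOn_Ioi_rpow_of_lt (by norm_num) hK) measurableSet_Ioi fun r hr => ?_
  have hr : 0 < r := hK.trans hr
  calc r ^ 2 * ((1 + r ^ 2)⁻¹) ^ 2 ≤ r ^ 2 * ((r ^ 2)⁻¹) ^ 2 := by gcongr; linarith
    _ = r ^ (-2 : ℝ) := by rw [rpow_neg hr.le, rpow_two]; field_simp

section FinrankThree

variable {E : Type*} [NormedAddCommGroup E] [InnerProductSpace ℝ E] [FiniteDimensional ℝ E]
  [MeasurableSpace E] [BorelSpace E]

theorem measureReal_ball_zero_one_of_finrank_eq_three (hE : finrank ℝ E = 3) :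
    volume.real (Metric.ball (0 : E) 1) = 4 * π / 3 := by
  rw [measureReal_def, InnerProductSpace.volume_ball_of_dim_odd (k := 1) hE, hE]
  norm_num
  rw [ENNReal.toReal_ofReal (by positivity)]
  ring

theorem integral_fun_norm_of_finrank_eq_three (hE : finrank ℝ E = 3) (f : ℝ → ℝ) :
    ∫ x : E, f ‖x‖ = 4 * π * ∫ r in Ioi 0, r ^ 2 * f r := by
  have : Nontrivial E := Module.nontrivial_of_finrank_pos (R := ℝ) (by omega)
  rw [integral_fun_norm_addHaar, measureReal_ball_zero_one_of_finrank_eq_three hE, hE]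
  simp only [nsmul_eq_mul, smul_eq_mul]
  ring

theorem integrable_fun_norm_iff_of_finrank_eq_three (hE : finrank ℝ E = 3) {f : ℝ → ℝ} :
    Integrable (fun x : E => f ‖x‖) ↔ IntegrableOn (fun r => r ^ 2 * f r) (Ioi 0) := by
  have : Nontrivial E := Module.nontrivial_of_finrank_pos (R := ℝ) (by omega)
  rw [integrable_fun_norm_addHaar, hE]
  rfl

theorem integrable_inv_one_add_norm_sq_sq (hE : finrank ℝ E = 3) :
    Integrable fun x : E => ((1 + ‖x‖ ^ 2)⁻¹) ^ 2 :=
  (integrable_fun_norm_iff_of_finrank_eq_three hE).2 integrableOn_Ioi_sq_mul_inv_one_add_sq_sq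

theorem integral_inv_one_add_norm_sq_sq (hE : finrank ℝ E = 3) :
    ∫ x : E, ((1 + ‖x‖ ^ 2)⁻¹) ^ 2 = π ^ 2 := by
  rw [integral_fun_norm_of_finrank_eq_three hE (fun r => ((1 + r ^ 2)⁻¹) ^ 2),
    integral_Ioi_sq_mul_inv_one_add_sq_sq]
  ring

theorem setIntegral_inv_one_add_norm_sq_sq_le (hE : finrank ℝ E = 3) {K : ℝ} (hK : 0 < K) :
    ∫ x in {x : E | K ≤ ‖x‖}, ((1 + ‖x‖ ^ 2)⁻¹) ^ 2 ≤ 4 * π / K := by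
  have hS : MeasurableSet {x : E | K ≤ ‖x‖} := measurableSet_le measurable_const measurable_norm
  have hradial : ∫ r in Ioi 0, r ^ 2 * (Ici K).indicator (fun r => ((1 + r ^ 2)⁻¹) ^ 2) r =
      ∫ r in Ioi K, r ^ 2 * ((1 + r ^ 2)⁻¹) ^ 2 := by
    simp_rw [← indicator_mul_right _ (fun r : ℝ => r ^ 2)]
    rw [setIntegral_indicator measurableSet_Ici, inter_eq_right.2 (Ici_subset_Ioi.2 hK),
      integral_Ici_eq_integral_Ioi]
  rw [← integral_indicator hS]
  change ∫ x : E, (Ici K).indicator (fun r => ((1 + r ^ 2)⁻¹) ^ 2) ‖x‖ ≤ _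
  rw [integral_fun_norm_of_finrank_eq_three hE, hradial, div_eq_mul_inv]
  gcongr
  exact integral_Ioi_sq_mul_inv_one_add_sq_sq_le hK

theorem setIntegral_inv_mul_inv_le (hE : finrank ℝ E = 3) {K : ℝ} (hK : 0 < K) (h : E) :
    ∫ k in {k : E | K ≤ ‖k‖}, ((1 + ‖k‖ ^ 2) * (1 + ‖h - k‖ ^ 2))⁻¹ ≤ √(4 * π / K) * π := by
  set S := {k : E | K ≤ ‖k‖}
  have hf : MemLp (fun k : E => (1 + ‖k‖ ^ 2)⁻¹) 2 :=
    (memLp_two_iff_integrable_sq (by fun_prop)).2 (integrable_inv_one_add_norm_sq_sq hE)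
  have hg : MemLp (fun k : E => (1 + ‖h - k‖ ^ 2)⁻¹) 2 :=
    hf.comp_measurePreserving (Measure.measurePreserving_sub_left volume h)
  have hf_sq : ∫ k in S, ((1 + ‖k‖ ^ 2)⁻¹) ^ 2 ≤ 4 * π / K :=
    setIntegral_inv_one_add_norm_sq_sq_le hE hK
  have hg_sq : ∫ k in S, ((1 + ‖h - k‖ ^ 2)⁻¹) ^ 2 ≤ π ^ 2 := by
    refine (setIntegral_le_integral hg.integrable_sq (.of_forall fun k => by positivity)).trans_eq ?_
    rw [integral_sub_left_eq_self (fun k => ((1 + ‖k‖ ^ 2)⁻¹) ^ 2),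
      integral_inv_one_add_norm_sq_sq hE]
  calc ∫ k in S, ((1 + ‖k‖ ^ 2) * (1 + ‖h - k‖ ^ 2))⁻¹
      = ∫ k in S, (1 + ‖k‖ ^ 2)⁻¹ * (1 + ‖h - k‖ ^ 2)⁻¹ := by simp_rw [mul_inv]
    _ ≤ √(∫ k in S, ((1 + ‖k‖ ^ 2)⁻¹) ^ 2) * √(∫ k in S, ((1 + ‖h - k‖ ^ 2)⁻¹) ^ 2) :=
      integral_mul_le_sqrt_mul_sqrt (hf.restrict S) (hg.restrict S)
    _ ≤ √(4 * π / K) * √(π ^ 2) := by gcongr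
    _ = √(4 * π / K) * π := by rw [sqrt_sq pi_pos.le]

end FinrankThree

theorem sqrt_four_pi_div_mul_pi {K : ℝ} (hK : 0 ≤ K) :
    √(4 * π / K) * π = 2 * π ^ ((3 : ℝ) / 2) * K ^ (-(1 : ℝ) / 2) := by
  rw [show (3 : ℝ) / 2 = 1 + 1 / 2 by norm_num, rpow_add pi_pos, rpow_one, ← sqrt_eq_rpow,
    neg_div, rpow_neg hK, ← sqrt_eq_rpow, sqrt_div' _ hK, sqrt_mul (by norm_num),
    show (4 : ℝ) = 2 ^ 2 by norm_num, sqrt_sq zero_le_two]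
  ring

/-- For every `K > 0` and `h ∈ ℝ³`,
`∫_{‖k‖ ≥ K} ((1+‖k‖²)(1+‖h-k‖²))⁻¹ dk ≤ 2 π^{3/2} K^{-1/2}`; in particular the constant
`C̃_K = sup_h ∫_{‖k‖ ≥ K} ((1+‖k‖²)(1+‖h-k‖²))⁻¹ dk` tends to `0` as `K → ∞`. -/
theorem stmt5 :
    (∀ K : ℝ, 0 < K → ∀ h : E3,
      (∫ k in {k : E3 | K ≤ ‖k‖}, ((1 + ‖k‖ ^ 2) * (1 + ‖h - k‖ ^ 2))⁻¹) ≤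
        2 * π ^ ((3 : ℝ) / 2) * K ^ (-(1 : ℝ) / 2)) ∧
    Tendsto (fun K : ℝ =>
        ⨆ h : E3, ∫ k in {k : E3 | K ≤ ‖k‖}, ((1 + ‖k‖ ^ 2) * (1 + ‖h - k‖ ^ 2))⁻¹)
      atTop (nhds 0) := by
  have hbound (K : ℝ) (hK : 0 < K) (h : E3) :
      ∫ k in {k : E3 | K ≤ ‖k‖}, ((1 + ‖k‖ ^ 2) * (1 + ‖h - k‖ ^ 2))⁻¹ ≤
        2 * π ^ ((3 : ℝ) / 2) * K ^ (-(1 : ℝ) / 2) :=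
    (setIntegral_inv_mul_inv_le finrank_euclideanSpace_fin hK h).trans_eq
      (sqrt_four_pi_div_mul_pi hK.le)
  refine ⟨hbound, ?_⟩
  have hlim : Tendsto (fun K : ℝ => 2 * π ^ ((3 : ℝ) / 2) * K ^ (-(1 : ℝ) / 2)) atTop (𝓝 0) := by
    simpa [neg_div] using
      (tendsto_rpow_neg_atTop (by norm_num : (0 : ℝ) < 1 / 2)).const_mul (2 * π ^ ((3 : ℝ) / 2))
  refine tendsto_of_tendsto_of_tendsto_of_le_of_le' tendsto_const_nhds hlim ?_ ?_
  · exact .of_forall fun K => Real.iSup_nonneg fun h => integral_nonneg fun k => by positivity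
  · filter_upwards [eventually_gt_atTop 0] with K hK
    exact ciSup_le (hbound K hK)
end
end

section
/- Let ψ : ℝ³ → ℂ be continuously differentiable with ψ and all its first-order partial derivatives square integrable, and assume ∫_{ℝ³} |ψ(x)|² dx = 1. Then for every k ∈ ℝ³, | ∫_{ℝ³} e^{i k·x} |ψ(x)|² dx | ≤ 2 (1 + ‖k‖²)^{-1} (1 + ‖k‖ ‖∇ψ‖_{L²}), where ‖∇ψ‖_{L²} = (∫_{ℝ³} ‖∇ψ(x)‖² dx)^{1/2}. -/
/-!
Write `u = |ψ|²`. The integral is the Fourier transform of `u` at `w = -k / 2π`, so it is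
bounded by `‖u‖₁ = 1`, and, since the Fourier transform turns `∇u` into `2πi w û(w)`, also
`‖k‖ |û(w)| ≤ ‖∇u‖₁`. Finally `|∇u| ≤ 2 |ψ| |∇ψ|`, so by Cauchy–Schwarz `‖∇u‖₁ ≤ 2 ‖∇ψ‖₂`.
With `T = |û(w)|`, adding `T ≤ 1` to `‖k‖` times `‖k‖ T ≤ 2 ‖∇ψ‖₂` gives
`(1 + ‖k‖²) T ≤ 2 (1 + ‖k‖ ‖∇ψ‖₂)`.
-/

open MeasureTheory Real FourierTransform
open scoped RealInnerProductSpace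

section Coordinates

variable {ι F : Type*} [Fintype ι] [DecidableEq ι]

theorem ContinuousLinearMap.opNorm_sq_le_sum_norm_single_sq [SeminormedAddCommGroup F]
    [NormedSpace ℝ F] (f : EuclideanSpace ℝ ι →L[ℝ] F) :
    ‖f‖ ^ 2 ≤ ∑ i, ‖f (EuclideanSpace.single i 1)‖ ^ 2 := by
  rw [← Real.le_sqrt (norm_nonneg f) (by positivity)]
  refine f.opNorm_le_bound (by positivity) fun v => ?_
  have hv : v = ∑ i, v i • EuclideanSpace.single i (1 : ℝ) := by
    simpa using ((EuclideanSpace.basisFun ι ℝ).sum_repr v).symm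
  calc ‖f v‖ ≤ ∑ i, ‖v i‖ * ‖f (EuclideanSpace.single i 1)‖ := by
        conv_lhs => rw [hv]
        rw [map_sum]
        refine (norm_sum_le _ _).trans_eq ?_
        simp only [map_smul, norm_smul]
    _ ≤ √(∑ i, ‖v i‖ ^ 2) * √(∑ i, ‖f (EuclideanSpace.single i 1)‖ ^ 2) :=
        Real.sum_mul_le_sqrt_mul_sqrt _ _ _
    _ = _ := by rw [EuclideanSpace.norm_eq, mul_comm]

theorem integrable_norm_fderiv_sq [NormedAddCommGroup F] [NormedSpace ℝ F] [CompleteSpace F]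
    {μ : Measure (EuclideanSpace ℝ ι)} {ψ : EuclideanSpace ℝ ι → F}
    (h : ∀ i, Integrable (fun x => ‖fderiv ℝ ψ x (EuclideanSpace.single i 1)‖ ^ 2) μ) :
    Integrable (fun x => ‖fderiv ℝ ψ x‖ ^ 2) μ :=
  (integrable_finsetSum _ fun i _ => h i).mono'
    ((measurable_fderiv ℝ ψ).norm.pow_const 2).aestronglyMeasurable
    (ae_of_all μ fun x => by
      simpa only [norm_pow, norm_norm] using (fderiv ℝ ψ x).opNorm_sq_le_sum_norm_single_sq)

end Coordinates

theorem integral_norm_mul_norm_le_sqrt_mul_sqrt {α E F : Type*} [MeasurableSpace α]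
    {μ : Measure α} [NormedAddCommGroup E] [NormedAddCommGroup F] {f : α → E} {g : α → F}
    (hf : MemLp f 2 μ) (hg : MemLp g 2 μ) :
    ∫ a, ‖f a‖ * ‖g a‖ ∂μ ≤ √(∫ a, ‖f a‖ ^ 2 ∂μ) * √(∫ a, ‖g a‖ ^ 2 ∂μ) := by
  have h := integral_mul_le_Lp_mul_Lq_of_nonneg Real.HolderConjugate.two_two
    (ae_of_all μ fun a => norm_nonneg (f a)) (ae_of_all μ fun a => norm_nonneg (g a))
    (by simpa using hf.norm) (by simpa using hg.norm)
  simpa [Real.sqrt_eq_rpow] using h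

section NormSq

variable {V F : Type*} [NormedAddCommGroup V] [NormedSpace ℝ V] [NormedAddCommGroup F]
  [InnerProductSpace ℝ F]

theorem norm_fderiv_norm_sq_le {ψ : V → F} {x : V} (hψ : DifferentiableAt ℝ ψ x) :
    ‖fderiv ℝ (fun y => ‖ψ y‖ ^ 2) x‖ ≤ 2 * (‖ψ x‖ * ‖fderiv ℝ ψ x‖) := by
  rw [hψ.hasFDerivAt.norm_sq.fderiv]
  refine norm_nsmul_le.trans ?_
  push_cast
  gcongr
  exact ((innerSL ℝ (ψ x)).opNorm_comp_le _).trans_eq (by rw [innerSL_apply_norm])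

variable [FiniteDimensional ℝ V] [MeasurableSpace V] [BorelSpace V] {μ : Measure V}
  {ψ : V → F}

theorem integrable_fderiv_norm_sq (hψ : Differentiable ℝ ψ) (hψ2 : MemLp ψ 2 μ)
    (hdψ2 : MemLp (fderiv ℝ ψ) 2 μ) : Integrable (fderiv ℝ fun x => ‖ψ x‖ ^ 2) μ :=
  ((hψ2.norm.integrable_mul hdψ2.norm).const_mul 2).mono'
    (measurable_fderiv ℝ _).aestronglyMeasurable
    (ae_of_all μ fun x => norm_fderiv_norm_sq_le (hψ x))

theorem integral_norm_fderiv_norm_sq_le (hψ : Differentiable ℝ ψ) (hψ2 : MemLp ψ 2 μ)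
    (hdψ2 : MemLp (fderiv ℝ ψ) 2 μ) :
    ∫ x, ‖fderiv ℝ (fun y => ‖ψ y‖ ^ 2) x‖ ∂μ ≤
      2 * (√(∫ x, ‖ψ x‖ ^ 2 ∂μ) * √(∫ x, ‖fderiv ℝ ψ x‖ ^ 2 ∂μ)) :=
  calc ∫ x, ‖fderiv ℝ (fun y => ‖ψ y‖ ^ 2) x‖ ∂μ
      ≤ ∫ x, 2 * (‖ψ x‖ * ‖fderiv ℝ ψ x‖) ∂μ :=
        integral_mono (integrable_fderiv_norm_sq hψ hψ2 hdψ2).norm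
          ((hψ2.norm.integrable_mul hdψ2.norm).const_mul 2)
          fun x => norm_fderiv_norm_sq_le (hψ x)
    _ = 2 * ∫ x, ‖ψ x‖ * ‖fderiv ℝ ψ x‖ ∂μ := integral_const_mul _ _
    _ ≤ _ := by gcongr; exact integral_norm_mul_norm_le_sqrt_mul_sqrt hψ2 hdψ2

end NormSq

section Fourier

variable {V : Type*} [NormedAddCommGroup V] [InnerProductSpace ℝ V]

theorem norm_integral_exp_inner_mul_le [MeasurableSpace V] (μ : Measure V) (g : V → ℂ) (k : V) :
    ‖∫ x, Complex.exp (Complex.I * (⟪k, x⟫ : ℂ)) * g x ∂μ‖ ≤ ∫ x, ‖g x‖ ∂μ :=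
  (norm_integral_le_integral_norm _).trans_eq <| by
    simp only [norm_mul, mul_comm Complex.I, Complex.norm_exp_ofReal_mul_I, one_mul]

variable [FiniteDimensional ℝ V] [MeasurableSpace V] [BorelSpace V]

theorem integral_exp_inner_mul_eq_fourier (g : V → ℂ) (k : V) :
    ∫ x, Complex.exp (Complex.I * (⟪k, x⟫ : ℂ)) * g x = 𝓕 g (-(2 * π)⁻¹ • k) := by
  rw [Real.fourier_eq']
  congr 1 with x
  rw [inner_smul_right, real_inner_comm, smul_eq_mul, mul_comm Complex.I]
  congr 3
  field_simp

theorem norm_mul_norm_integral_exp_inner_mul_le {g : V → ℂ} (hg : Integrable g)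
    (hg_diff : Differentiable ℝ g) (hg' : Integrable (fderiv ℝ g)) (k : V) :
    ‖k‖ * ‖∫ x, Complex.exp (Complex.I * (⟪k, x⟫ : ℂ)) * g x‖ ≤ ∫ x, ‖fderiv ℝ g x‖ := by
  set w : V := -(2 * π)⁻¹ • k
  have hw : 2 * π * ‖w‖ = ‖k‖ := by
    rw [norm_smul, norm_neg, norm_inv, Real.norm_of_nonneg (by positivity)]
    field_simp
  calc ‖k‖ * ‖∫ x, Complex.exp (Complex.I * (⟪k, x⟫ : ℂ)) * g x‖
      = ‖𝓕 (fderiv ℝ g) w‖ := by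
        rw [integral_exp_inner_mul_eq_fourier, Real.fourier_fderiv hg hg_diff hg',
          VectorFourier.norm_fourierSMulRight, neg_apply, norm_neg,
          innerSL_apply_norm, hw]
    _ ≤ ∫ x, ‖fderiv ℝ g x‖ :=
        VectorFourier.norm_fourierIntegral_le_integral_norm _ _ _ _ _

theorem norm_mul_norm_integral_exp_inner_mul_ofReal_le {u : V → ℝ} (hu : Integrable u)
    (hu_diff : Differentiable ℝ u) (hu' : Integrable (fderiv ℝ u)) (k : V) :
    ‖k‖ * ‖∫ x, Complex.exp (Complex.I * (⟪k, x⟫ : ℂ)) * (u x : ℂ)‖ ≤ ∫ x, ‖fderiv ℝ u x‖ := by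
  have hderiv : ∀ x, HasFDerivAt (fun y => (u y : ℂ)) (Complex.ofRealCLM.comp (fderiv ℝ u x)) x :=
    fun x => Complex.ofRealCLM.hasFDerivAt.comp x (hu_diff x).hasFDerivAt
  have hfderiv : fderiv ℝ (fun y => (u y : ℂ)) = fun x => Complex.ofRealCLM.comp (fderiv ℝ u x) :=
    funext fun x => (hderiv x).fderiv
  have hnorm : ∀ x, ‖fderiv ℝ (fun y => (u y : ℂ)) x‖ = ‖fderiv ℝ u x‖ := fun x => by
    rw [hfderiv]
    exact Complex.ofRealLI.norm_toContinuousLinearMap_comp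
  refine (norm_mul_norm_integral_exp_inner_mul_le (g := fun x => (u x : ℂ))
    (Complex.ofRealCLM.integrable_comp hu) (fun x => (hderiv x).differentiableAt) ?_ k).trans_eq
    (by simp only [hnorm])
  rw [hfderiv]
  exact (Complex.ofRealCLM.compL ℝ V ℝ ℂ).integrable_comp hu'

end Fourier

/-- Lieb–Yamazaki commutator estimate: if `ψ` is `C¹` with `ψ` and all first-order partial
derivatives square integrable and `∫ |ψ|² = 1`, then for every `k ∈ ℝ³`,
`|∫ e^{ik·x} |ψ(x)|² dx| ≤ 2 (1+‖k‖²)⁻¹ (1 + ‖k‖ ‖∇ψ‖_{L²})`. -/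
theorem stmt6 (ψ : E3 → ℂ) (hψ : ContDiff ℝ 1 ψ)
    (hψ2 : Integrable (fun x : E3 => ‖ψ x‖ ^ 2))
    (hdψ2 : ∀ i : Fin 3,
      Integrable (fun x : E3 => ‖fderiv ℝ ψ x (EuclideanSpace.single i (1 : ℝ))‖ ^ 2))
    (hnorm : (∫ x : E3, ‖ψ x‖ ^ 2) = 1) (k : E3) :
    ‖∫ x : E3, Complex.exp (Complex.I * ((inner ℝ k x : ℝ) : ℂ)) * ((‖ψ x‖ ^ 2 : ℝ) : ℂ)‖ ≤
      2 * (1 + ‖k‖ ^ 2)⁻¹ *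
        (1 + ‖k‖ * Real.sqrt
          (∫ x : E3, ∑ i : Fin 3, ‖fderiv ℝ ψ x (EuclideanSpace.single i (1 : ℝ))‖ ^ 2)) := by
  set T := ‖∫ x : E3, Complex.exp (Complex.I * ((inner ℝ k x : ℝ) : ℂ)) * ((‖ψ x‖ ^ 2 : ℝ) : ℂ)‖
  have hψd : Differentiable ℝ ψ := hψ.differentiable one_ne_zero
  have hψL2 : MemLp ψ 2 :=
    (memLp_two_iff_integrable_sq_norm hψ.continuous.aestronglyMeasurable).2 hψ2
  have hgrad_sq : Integrable fun x => ‖fderiv ℝ ψ x‖ ^ 2 := integrable_norm_fderiv_sq hdψ2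
  have hgradL2 : MemLp (fderiv ℝ ψ) 2 :=
    (memLp_two_iff_integrable_sq_norm (measurable_fderiv ℝ ψ).aestronglyMeasurable).2 hgrad_sq
  have hT : T ≤ 1 := (norm_integral_exp_inner_mul_le volume _ k).trans_eq <| by
    simpa only [Complex.norm_real, norm_pow, norm_norm] using hnorm
  have hkT : ‖k‖ * T ≤ 2 * √(∫ x, ∑ i : Fin 3, ‖fderiv ℝ ψ x (EuclideanSpace.single i 1)‖ ^ 2) :=
    calc ‖k‖ * T ≤ ∫ x, ‖fderiv ℝ (fun y => ‖ψ y‖ ^ 2) x‖ :=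
          norm_mul_norm_integral_exp_inner_mul_ofReal_le hψ2 (hψd.norm_sq ℝ)
            (integrable_fderiv_norm_sq hψd hψL2 hgradL2) k
      _ ≤ 2 * (√(∫ x, ‖ψ x‖ ^ 2) * √(∫ x, ‖fderiv ℝ ψ x‖ ^ 2)) :=
          integral_norm_fderiv_norm_sq_le hψd hψL2 hgradL2
      _ ≤ _ := by
          rw [hnorm, sqrt_one, one_mul]
          gcongr 2 * √?_
          exact integral_mono hgrad_sq (integrable_finsetSum _ fun i _ => hdψ2 i)
            fun x => (fderiv ℝ ψ x).opNorm_sq_le_sum_norm_single_sq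
  rw [mul_right_comm, ← div_eq_mul_inv, le_div_iff₀ (by positivity)]
  nlinarith [norm_nonneg k]
end

section
/- For every K ≥ 1 and all x, y ∈ ℝ³, | ∫_{{k ∈ ℝ³ : ‖k‖ ≥ K}} e^{i k·(x-y)} (‖k‖² (1+‖k‖²)²)^{-1} dk − 2 Re ∫_{{k ∈ ℝ³ : ‖k‖ ≥ K}} e^{i k·(x-y)} (‖k‖² (1+‖k‖²))^{-1} dk | ≤ 12π K^{-1}. Equivalently, the two-body potential V_K(x-y) = N^{-1}(⟨B_{K,x}, B_{K,y}⟩ + 2 Re⟨G_x, B_{K,y}⟩) satisfies |V_K(x-y)| ≤ 12π K^{-1} N^{-1} for every N ≥ 1. -/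
open MeasureTheory Real

noncomputable section

/-- The function `B_{K,x}(k) = -(‖k‖(1+‖k‖²))⁻¹ e^{-i k·x}` for `‖k‖ ≥ K`, zero otherwise. -/
def formFactorB (K : ℝ) (x : E3) (k : E3) : ℂ :=
  if K ≤ ‖k‖ then
    -(((‖k‖ * (1 + ‖k‖ ^ 2) : ℝ)) : ℂ)⁻¹ * Complex.exp (-Complex.I * ((inner ℝ k x : ℝ) : ℂ))
  else 0

/-- The full form factor `G_x(k) = ‖k‖⁻¹ e^{-i k·x}`. -/
def formFactorG (x : E3) (k : E3) : ℂ :=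
  ((‖k‖⁻¹ : ℝ) : ℂ) * Complex.exp (-Complex.I * ((inner ℝ k x : ℝ) : ℂ))

/-! Every integrand has modulus `(‖k‖² p(‖k‖))⁻¹` on `{‖k‖ ≥ K}` with `p(r) ≥ r²`, the phases having
modulus one. In polar coordinates the weight `4π r²` cancels the factor `‖k‖²`, leaving
`4π ∫_K^∞ p(r)⁻¹ dr ≤ 4π ∫_K^∞ r⁻² dr = 4π/K`; the potential is one such integral plus twice the
real part of another, whence `3 · 4π/K`. -/

open Set

lemma norm_setIntegral_le_of_norm_eqOn {α F : Type*} [MeasurableSpace α] [NormedAddCommGroup F]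
    [NormedSpace ℝ F] {μ : Measure α} {s : Set α} (hs : MeasurableSet s) {f : α → F}
    {g : α → ℝ} (hfg : ∀ a ∈ s, ‖f a‖ = g a) :
    ‖∫ a in s, f a ∂μ‖ ≤ ∫ a in s, g a ∂μ :=
  (norm_integral_le_integral_norm f).trans_eq (setIntegral_congr_fun hs hfg)

lemma integral_fun_norm_euclideanSpace_fin_three (f : ℝ → ℝ) :
    ∫ k : E3, f ‖k‖ = 4 * π * ∫ r in Ioi 0, r ^ 2 * f r := by
  rw [integral_fun_norm_addHaar, finrank_euclideanSpace, measureReal_def,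
    EuclideanSpace.volume_ball_fin_three]
  simp only [Fintype.card_fin, ENNReal.ofReal_one, one_pow, one_mul, smul_eq_mul, nsmul_eq_mul]
  rw [ENNReal.toReal_ofReal (by positivity)]
  ring

lemma setIntegral_norm_ge_eq {K : ℝ} (hK : 0 < K) (f : ℝ → ℝ) :
    ∫ k in {k : E3 | K ≤ ‖k‖}, f ‖k‖ = 4 * π * ∫ r in Ioi K, r ^ 2 * f r := by
  have hS : MeasurableSet {k : E3 | K ≤ ‖k‖} := measurableSet_le measurable_const measurable_norm
  have hIci : Ioi 0 ∩ Ici K = Ici K := inter_eq_right.mpr fun r (hr : K ≤ r) => hK.trans_le hr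
  rw [← integral_indicator hS, ← integral_Ici_eq_integral_Ioi, ← hIci,
    ← setIntegral_indicator measurableSet_Ici]
  have hind (k : E3) : {k : E3 | K ≤ ‖k‖}.indicator (fun k => f ‖k‖) k = (Ici K).indicator f ‖k‖ :=
    rfl
  have hmul (r : ℝ) :
      (Ici K).indicator (fun r => r ^ 2 * f r) r = r ^ 2 * (Ici K).indicator f r := by
    by_cases hr : r ∈ Ici K <;> simp [hr]
  simp only [hind, hmul]
  exact integral_fun_norm_euclideanSpace_fin_three _

lemma setIntegral_Ioi_inv_le_inv {K : ℝ} (hK : 0 < K) {p : ℝ → ℝ} (hp : ∀ r, K ≤ r → r ^ 2 ≤ p r) :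
    ∫ r in Ioi K, (p r)⁻¹ ≤ K⁻¹ := by
  have hpos {r : ℝ} (hr : r ∈ Ioi K) : 0 < p r := by
    have : 0 < r := hK.trans hr
    exact (by positivity : (0 : ℝ) < r ^ 2).trans_le (hp r hr.le)
  calc ∫ r in Ioi K, (p r)⁻¹ ≤ ∫ r in Ioi K, r ^ (-2 : ℝ) := by
        refine integral_mono_of_nonneg ?_ (integrableOn_Ioi_rpow_of_lt (by norm_num) hK) ?_
          <;> refine (ae_restrict_iff' measurableSet_Ioi).2 (.of_forall fun r hr => ?_)
        · exact inv_nonneg.2 (hpos hr).le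
        · have : 0 < r := hK.trans hr
          simp only [rpow_neg this.le, rpow_two]
          exact inv_anti₀ (by positivity) (hp r hr.le)
    _ = K⁻¹ := by
        rw [integral_Ioi_rpow_of_lt (by norm_num) hK]
        norm_num [rpow_neg_one]

lemma setIntegral_norm_ge_inv_sq_mul_le {K : ℝ} (hK : 0 < K) {p : ℝ → ℝ}
    (hp : ∀ r, K ≤ r → r ^ 2 ≤ p r) :
    ∫ k in {k : E3 | K ≤ ‖k‖}, (‖k‖ ^ 2 * p ‖k‖)⁻¹ ≤ 4 * π / K := by
  rw [setIntegral_norm_ge_eq hK fun r => (r ^ 2 * p r)⁻¹]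
  have hcancel : ∫ r in Ioi K, r ^ 2 * (r ^ 2 * p r)⁻¹ = ∫ r in Ioi K, (p r)⁻¹ :=
    setIntegral_congr_fun measurableSet_Ioi fun r (hr : K < r) => by
      rw [mul_inv, ← mul_assoc, mul_inv_cancel₀ (pow_ne_zero 2 (hK.trans hr).ne'), one_mul]
  rw [hcancel, div_eq_mul_inv]
  gcongr
  exact setIntegral_Ioi_inv_le_inv hK hp

lemma norm_setIntegral_phase_mul_le {K : ℝ} (hK : 0 < K) {p : ℝ → ℝ}
    (hp : ∀ r, K ≤ r → r ^ 2 ≤ p r) (z : E3) :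
    ‖∫ k in {k : E3 | K ≤ ‖k‖}, Complex.exp (Complex.I * ((inner ℝ k z : ℝ) : ℂ)) *
        (((‖k‖ ^ 2 * p ‖k‖ : ℝ)) : ℂ)⁻¹‖ ≤ 4 * π / K := by
  refine (norm_setIntegral_le_of_norm_eqOn (measurableSet_le measurable_const measurable_norm)
    fun k (hk : K ≤ ‖k‖) => ?_).trans (setIntegral_norm_ge_inv_sq_mul_le hK hp)
  have : 0 ≤ ‖k‖ ^ 2 * p ‖k‖ := mul_nonneg (sq_nonneg _) ((sq_nonneg _).trans (hp _ hk))
  rw [norm_mul, Complex.norm_exp_I_mul_ofReal, one_mul, norm_inv, Complex.norm_of_nonneg this]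

lemma norm_exp_neg_I_mul_ofReal (θ : ℝ) : ‖Complex.exp (-Complex.I * θ)‖ = 1 := by
  rw [neg_mul, ← mul_neg, ← Complex.ofReal_neg, Complex.norm_exp_I_mul_ofReal]

lemma norm_formFactorB (K : ℝ) (x k : E3) :
    ‖formFactorB K x k‖ = if K ≤ ‖k‖ then (‖k‖ * (1 + ‖k‖ ^ 2))⁻¹ else 0 := by
  unfold formFactorB
  split_ifs
  · rw [norm_mul, norm_exp_neg_I_mul_ofReal, mul_one, norm_neg, norm_inv,
      Complex.norm_of_nonneg (by positivity)]
  · exact norm_zero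

lemma norm_formFactorG (x k : E3) : ‖formFactorG x k‖ = ‖k‖⁻¹ := by
  rw [formFactorG, norm_mul, norm_exp_neg_I_mul_ofReal, mul_one,
    Complex.norm_of_nonneg (by positivity)]

lemma integral_mul_formFactorB_eq_setIntegral (f : E3 → ℂ) (K : ℝ) (y : E3) :
    ∫ k, f k * formFactorB K y k = ∫ k in {k : E3 | K ≤ ‖k‖}, f k * formFactorB K y k :=
  (setIntegral_eq_integral_of_forall_compl_eq_zero fun k (hk : ¬K ≤ ‖k‖) => by
    rw [formFactorB, if_neg hk, mul_zero]).symm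

lemma norm_integral_conj_formFactorB_mul_le {K : ℝ} (hK : 0 < K) (x y : E3) :
    ‖∫ k, (starRingEnd ℂ) (formFactorB K x k) * formFactorB K y k‖ ≤ 4 * π / K := by
  rw [integral_mul_formFactorB_eq_setIntegral]
  refine (norm_setIntegral_le_of_norm_eqOn (measurableSet_le measurable_const measurable_norm)
    fun k (hk : K ≤ ‖k‖) => ?_).trans
      (setIntegral_norm_ge_inv_sq_mul_le hK (p := fun r => (1 + r ^ 2) ^ 2) fun r _ => by nlinarith)
  rw [norm_mul, RCLike.norm_conj, norm_formFactorB, norm_formFactorB, if_pos hk, ← mul_inv]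
  ring_nf

lemma norm_integral_conj_formFactorG_mul_le {K : ℝ} (hK : 0 < K) (x y : E3) :
    ‖∫ k, (starRingEnd ℂ) (formFactorG x k) * formFactorB K y k‖ ≤ 4 * π / K := by
  rw [integral_mul_formFactorB_eq_setIntegral]
  refine (norm_setIntegral_le_of_norm_eqOn (measurableSet_le measurable_const measurable_norm)
    fun k (hk : K ≤ ‖k‖) => ?_).trans
      (setIntegral_norm_ge_inv_sq_mul_le hK (p := fun r => 1 + r ^ 2) fun r _ => by linarith)
  rw [norm_mul, RCLike.norm_conj, norm_formFactorG, norm_formFactorB, if_pos hk, ← mul_inv]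
  ring_nf

lemma norm_add_norm_two_mul_ofReal_re_le {a b : ℂ} {C : ℝ} (ha : ‖a‖ ≤ C) (hb : ‖b‖ ≤ C) :
    ‖a‖ + ‖2 * (b.re : ℂ)‖ ≤ 3 * C := by
  rw [norm_mul, Complex.norm_real, Real.norm_eq_abs, Complex.norm_two]
  linarith [(Complex.abs_re_le_norm b).trans hb]

/-- Bound on the two-body potential `V_K`: for `K ≥ 1` and `x, y ∈ ℝ³`,
`|∫_{‖k‖ ≥ K} e^{ik·(x-y)} (‖k‖²(1+‖k‖²)²)⁻¹ dk − 2 Re ∫_{‖k‖ ≥ K} e^{ik·(x-y)}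
(‖k‖²(1+‖k‖²))⁻¹ dk| ≤ 12π/K`; equivalently
`V_K(x-y) = N⁻¹(⟨B_{K,x}, B_{K,y}⟩ + 2 Re⟨G_x, B_{K,y}⟩)` satisfies
`|V_K(x-y)| ≤ 12π/(KN)` for every `N ≥ 1`. -/
theorem stmt10 (K : ℝ) (hK : 1 ≤ K) (x y : E3) :
    ‖(∫ k in {k : E3 | K ≤ ‖k‖},
        Complex.exp (Complex.I * ((inner ℝ k (x - y) : ℝ) : ℂ)) *
          (((‖k‖ ^ 2 * (1 + ‖k‖ ^ 2) ^ 2 : ℝ)) : ℂ)⁻¹) -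
      2 * (((∫ k in {k : E3 | K ≤ ‖k‖},
        Complex.exp (Complex.I * ((inner ℝ k (x - y) : ℝ) : ℂ)) *
          (((‖k‖ ^ 2 * (1 + ‖k‖ ^ 2) : ℝ)) : ℂ)⁻¹).re : ℝ) : ℂ)‖ ≤ 12 * π / K ∧
    ∀ N : ℕ, 1 ≤ N →
      ‖((N : ℂ))⁻¹ * ((∫ k : E3, (starRingEnd ℂ) (formFactorB K x k) * formFactorB K y k) +
        2 * (((∫ k : E3, (starRingEnd ℂ) (formFactorG x k) * formFactorB K y k).re : ℝ) : ℂ))‖ ≤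
        12 * π / (K * N) := by
  have hK0 : 0 < K := zero_lt_one.trans_le hK
  have h12 : 3 * (4 * π / K) = 12 * π / K := by ring
  refine ⟨?_, fun N _ => ?_⟩
  · refine (norm_sub_le _ _).trans (h12.le.trans' (norm_add_norm_two_mul_ofReal_re_le ?_ ?_))
    · exact norm_setIntegral_phase_mul_le hK0 (p := fun r => (1 + r ^ 2) ^ 2)
        (fun r _ => by nlinarith) (x - y)
    · exact norm_setIntegral_phase_mul_le hK0 (p := fun r => 1 + r ^ 2)
        (fun r _ => by linarith) (x - y)
  · have hV := (norm_add_le _ _).trans (h12.le.trans' (norm_add_norm_two_mul_ofReal_re_le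
      (norm_integral_conj_formFactorB_mul_le hK0 x y)
      (norm_integral_conj_formFactorG_mul_le hK0 x y)))
    rw [norm_mul, norm_inv, Complex.norm_natCast, ← div_eq_inv_mul, ← div_div]
    exact div_le_div_of_nonneg_right hV (Nat.cast_nonneg N)
end
end

section
/- Let H be a complex Hilbert space, let γ be a positive trace-class operator on H with trace equal to 1, let ψ ∈ H with ‖ψ‖ = 1, and let P = |ψ⟩⟨ψ| be the orthogonal projection onto the span of ψ. Then 1 − ⟨ψ, γψ⟩ ≤ ‖γ − P‖₁ ≤ 4 √(1 − ⟨ψ, γψ⟩), where ‖·‖₁ denotes the trace norm and ⟨ψ, γψ⟩ (which is a real number in [0,1]) is the inner product of ψ with γψ. -/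
open MeasureTheory

noncomputable section

/-- The absolute value `|A| = √(A*A)` of an operator, via the continuous functional
calculus applied to `s ↦ |s|` (junk value if `A` is not self-adjoint). -/
def absOp {H : Type*} [NormedAddCommGroup H] [InnerProductSpace ℂ H] [CompleteSpace H]
    (A : H →L[ℂ] H) : H →L[ℂ] H :=
  cfc (fun s : ℝ => |s|) A

/-- The trace norm `‖A‖₁ = Tr|A|` computed with respect to a Hilbert basis `b`
(for positive `|A|` this is independent of the choice of `b`). -/
def traceNormWrt {H : Type*} [NormedAddCommGroup H] [InnerProductSpace ℂ H] [CompleteSpace H]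
    {ι : Type*} (b : HilbertBasis ι ℂ H) (A : H →L[ℂ] H) : ℝ :=
  ∑' i : ι, (inner ℂ (b i) (absOp A (b i)) : ℂ).re


/-!
Put `A = γ - |ψ⟩⟨ψ|`, `p = ⟪ψ, γ ψ⟫` and `ε = 1 - p`. Since `γ ≥ 0`, `A` is nonnegative on `ψᗮ`, and
this forces its negative part to have rank at most one: for `x ⊥ A⁻ ψ` the vector `y = A⁻ x` lies
in `ψᗮ`, while `A y = -A⁻ y` because `A⁺ A⁻ = 0`; so `⟪y, A⁻ y⟫ = 0` and `A⁻ x = 0`. Hence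
`A⁻ = |v⟩⟨v|`, and as `Tr A = 0` and `|A| = A + 2 A⁻`, the trace norm of `A` is `2 ‖v‖²`.

The lower bound is `ε = -⟪ψ, A ψ⟫ ≤ ⟪ψ, A⁻ ψ⟫ ≤ ‖v‖²`. For the upper bound, `v` is an eigenvector
of `A` for the eigenvalue `-‖v‖²`, so `‖v‖²` is at most the top of the spectrum of `|ψ⟩⟨ψ| - γ`.
Write `y = ⟪ψ, y⟫ ψ + w` with `w ⊥ ψ`; the trace condition on the orthonormal pair `ψ, w / ‖w‖`
gives `‖√γ w‖² ≤ ε ‖w‖²`, and the triangle inequality for `√γ y` then yields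
`|⟪ψ, y⟫|² - ⟪y, γ y⟫ ≤ (ε + √ε) ‖y‖²`. So `‖γ - P‖₁ ≤ 2 (ε + √ε) ≤ 4 √ε`.
-/

open scoped InnerProductSpace
open ContinuousLinearMap InnerProductSpace RCLike

section

variable {H : Type*} [NormedAddCommGroup H] [InnerProductSpace ℂ H] {ι : Type*}

lemma CFC.mul_negPart {𝒜 : Type*} [CStarAlgebra 𝒜] (a : 𝒜) (ha : IsSelfAdjoint a) :
    a * a⁻ = -(a⁻ * a⁻) := by
  calc a * a⁻ = (a⁺ - a⁻) * a⁻ := by rw [CFC.posPart_sub_negPart a]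
    _ = -(a⁻ * a⁻) := by rw [sub_mul, CFC.posPart_mul_negPart, zero_sub]

lemma re_inner_rankOne_self_apply (v x : H) :
    re ⟪x, rankOne ℂ v v x⟫_ℂ = ‖⟪v, x⟫_ℂ‖ ^ 2 := by
  rw [rankOne_apply, inner_smul_right, ← inner_conj_symm x v, RCLike.mul_conj]
  norm_cast

lemma HilbertBasis.hasSum_norm_inner_sq (b : HilbertBasis ι ℂ H) (x : H) :
    HasSum (fun i => ‖⟪x, b i⟫_ℂ‖ ^ 2) (‖x‖ ^ 2) := by
  have h := (b.hasSum_inner_mul_inner x x).mapL reCLM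
  simp only [reCLM_apply, inner_self_eq_norm_sq] at h
  refine h.congr_fun fun i => ?_
  rw [← re_inner_rankOne_self_apply, rankOne_apply, inner_smul_right]

lemma HilbertBasis.hasSum_re_inner_rankOne_self (b : HilbertBasis ι ℂ H) (v : H) :
    HasSum (fun i => re ⟪b i, rankOne ℂ v v (b i)⟫_ℂ) (‖v‖ ^ 2) := by
  simpa only [re_inner_rankOne_self_apply] using b.hasSum_norm_inner_sq v

/-- The arithmetic of the upper bound, for `a = |⟪ψ, y⟫|`, `r = ‖w‖`, `s = ‖√γ y‖`, `t = ‖√γ w‖`,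
`q = √p` and `e = √ε`. -/
lemma sq_sub_sq_le_of_sub_le_of_le {a r s t q e : ℝ} (ha : 0 ≤ a) (hr : 0 ≤ r) (hs : 0 ≤ s)
    (ht : 0 ≤ t) (hq : 0 ≤ q) (he : 0 ≤ e) (hqe : q ^ 2 + e ^ 2 = 1) (hs' : a * q - t ≤ s)
    (ht' : t ≤ e * r) : a ^ 2 - s ^ 2 ≤ (e ^ 2 + e) * (a ^ 2 + r ^ 2) := by
  have hq1 : q ≤ 1 := by nlinarith
  rcases le_total (a * q) t with h | h
  · nlinarith [mul_le_mul h h (by positivity) ht, mul_le_mul ht' ht' ht (by positivity)]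
  · nlinarith [mul_le_mul hs' hs' (sub_nonneg.mpr h) hs, mul_le_mul_of_nonneg_left ht' ha,
      sq_nonneg (a - r), mul_nonneg (mul_nonneg ha ht) (sub_nonneg.mpr hq1)]

variable [CompleteSpace H]

lemma IsSelfAdjoint.sum_norm_apply_sq_le_tsum {D : H →L[ℂ] H} (hD : IsSelfAdjoint D)
    (b : HilbertBasis ι ℂ H) (hs : Summable fun i => ‖D (b i)‖ ^ 2) {κ : Type*} {e : κ → H}
    (he : Orthonormal ℂ e) (s : Finset κ) :
    ∑ j ∈ s, ‖D (e j)‖ ^ 2 ≤ ∑' i, ‖D (b i)‖ ^ 2 := by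
  have hparseval (j : κ) : HasSum (fun i => ‖⟪e j, D (b i)⟫_ℂ‖ ^ 2) (‖D (e j)‖ ^ 2) := by
    refine (b.hasSum_norm_inner_sq (D (e j))).congr_fun fun i => ?_
    exact congrArg (‖·‖ ^ 2) (hD.isSymmetric (e j) (b i)).symm
  calc ∑ j ∈ s, ‖D (e j)‖ ^ 2 = ∑ j ∈ s, ∑' i, ‖⟪e j, D (b i)⟫_ℂ‖ ^ 2 :=
        Finset.sum_congr rfl fun j _ => (hparseval j).tsum_eq.symm
    _ = ∑' i, ∑ j ∈ s, ‖⟪e j, D (b i)⟫_ℂ‖ ^ 2 :=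
        (Summable.tsum_finsetSum fun j _ => (hparseval j).summable).symm
    _ ≤ ∑' i, ‖D (b i)‖ ^ 2 :=
        Summable.tsum_le_tsum (fun i => he.sum_inner_products_le _)
          (summable_sum fun j _ => (hparseval j).summable) hs

namespace ContinuousLinearMap

lemma IsPositive.sqrt_apply_sqrt_apply {T : H →L[ℂ] H} (hT : T.IsPositive) (x : H) :
    CFC.sqrt T (CFC.sqrt T x) = T x := by
  change (CFC.sqrt T * CFC.sqrt T) x = T x
  rw [CFC.sqrt_mul_sqrt_self T ((nonneg_iff_isPositive T).mpr hT)]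

lemma IsPositive.re_inner_apply_eq_norm_sqrt_sq {T : H →L[ℂ] H} (hT : T.IsPositive) (x : H) :
    re ⟪x, T x⟫_ℂ = ‖CFC.sqrt T x‖ ^ 2 := by
  have hS := (nonneg_iff_isPositive _).mp (CFC.sqrt_nonneg T)
  rw [← hT.sqrt_apply_sqrt_apply, ← hS.inner_left_eq_inner_right, inner_self_eq_norm_sq]

lemma IsPositive.apply_eq_zero_of_re_inner_eq_zero {T : H →L[ℂ] H} (hT : T.IsPositive) {x : H}
    (hx : re ⟪x, T x⟫_ℂ = 0) : T x = 0 := by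
  rw [hT.re_inner_apply_eq_norm_sqrt_sq, sq_eq_zero_iff, norm_eq_zero] at hx
  rw [← hT.sqrt_apply_sqrt_apply, hx, map_zero]

lemma negPart_isPositive (A : H →L[ℂ] H) : (A⁻).IsPositive :=
  (nonneg_iff_isPositive _).mp (CFC.negPart_nonneg A)

lemma neg_re_inner_le_re_inner_negPart {A : H →L[ℂ] H} (hA : IsSelfAdjoint A) (x : H) :
    -re ⟪x, A x⟫_ℂ ≤ re ⟪x, A⁻ x⟫_ℂ := by
  have hApos := ((nonneg_iff_isPositive _).mp (CFC.posPart_nonneg A)).re_inner_nonneg_right x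
  conv_lhs => rw [← CFC.posPart_sub_negPart A]
  rw [sub_apply, inner_sub_right, map_sub]
  linarith

lemma negPart_apply_eq_zero_of_inner_eq_zero {A : H →L[ℂ] H} (hA : IsSelfAdjoint A) {ψ : H}
    (hnonneg : ∀ y, ⟪ψ, y⟫_ℂ = 0 → 0 ≤ re ⟪y, A y⟫_ℂ) {x : H} (hx : ⟪A⁻ ψ, x⟫_ℂ = 0) :
    A⁻ x = 0 := by
  have hN := negPart_isPositive A
  have hAN : A (A⁻ x) = -A⁻ (A⁻ x) := congr($(CFC.mul_negPart A hA) x)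
  have hψ : ⟪ψ, A⁻ x⟫_ℂ = 0 := by rwa [← hN.inner_left_eq_inner_right]
  have hNN : A⁻ (A⁻ x) = 0 := by
    refine hN.apply_eq_zero_of_re_inner_eq_zero (le_antisymm ?_ (hN.re_inner_nonneg_right _))
    have := hnonneg _ hψ
    rw [hAN, inner_neg_right, map_neg] at this
    linarith
  rw [← inner_self_eq_zero (𝕜 := ℂ), hN.inner_left_eq_inner_right, hNN, inner_zero_right]

lemma IsPositive.exists_eq_rankOne_self {N : H →L[ℂ] H} (hN : N.IsPositive) {u : H}
    (hu : ∀ x, ⟪u, x⟫_ℂ = 0 → N x = 0) : ∃ v, N = rankOne ℂ v v := by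
  rcases eq_or_ne u 0 with rfl | hu0
  · exact ⟨0, by ext x; simp [hu x (inner_zero_left x)]⟩
  obtain ⟨e, hee, he⟩ : ∃ e : H, ⟪e, e⟫_ℂ = 1 ∧ ∀ x, ⟪e, x⟫_ℂ = 0 → N x = 0 :=
    ⟨(‖u‖⁻¹ : ℂ) • u, by rw [inner_self_eq_norm_sq_to_K]; simp [norm_smul, hu0],
      fun x hx => hu x (by simpa [inner_smul_left, hu0] using hx)⟩
  have hNx : ∀ x, N x = ⟪e, x⟫_ℂ • N e := fun x => by
    have h := he (x - ⟪e, x⟫_ℂ • e) (by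
      rw [inner_sub_right, inner_smul_right, hee, mul_one, sub_self])
    rwa [map_sub, map_smul, sub_eq_zero] at h
  have hNe : N e = ⟪e, N e⟫_ℂ • e := by
    refine ext_inner_left ℂ fun y => ?_
    rw [← hN.inner_left_eq_inner_right, hNx y, inner_smul_left, inner_smul_right, inner_conj_symm,
      hN.inner_left_eq_inner_right, mul_comm]
  set μ := re ⟪e, N e⟫_ℂ
  have hμ : ⟪e, N e⟫_ℂ = μ := (hN.isSymmetric.coe_re_inner_self_apply e).symm
  refine ⟨(Real.sqrt μ : ℂ) • e, ext fun x => ?_⟩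
  have hsqrt : (Real.sqrt μ : ℂ) * Real.sqrt μ = μ := by
    exact_mod_cast Real.mul_self_sqrt (hN.re_inner_nonneg_right e)
  rw [rankOne_apply, hNx x, hNe, hμ, inner_smul_left, Complex.conj_ofReal, smul_smul, smul_smul]
  congr 1
  linear_combination -⟪e, x⟫_ℂ * hsqrt

lemma IsPositive.exists_negPart_sub_rankOne_eq_rankOne {γ : H →L[ℂ] H} (hγ : γ.IsPositive)
    (ψ : H) : ∃ v, (γ - rankOne ℂ ψ ψ)⁻ = rankOne ℂ v v := by
  have hA := hγ.isSelfAdjoint.sub (isPositive_rankOne_self ψ).isSelfAdjoint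
  refine (negPart_isPositive _).exists_eq_rankOne_self fun x hx =>
    negPart_apply_eq_zero_of_inner_eq_zero hA (ψ := ψ) (fun y hy => ?_) hx
  simpa [inner_sub_right, hy] using hγ.re_inner_nonneg_right y

lemma IsPositive.sum_re_inner_le_tsum {γ : H →L[ℂ] H} (hγ : γ.IsPositive) (b : HilbertBasis ι ℂ H)
    (hs : Summable fun i => re ⟪b i, γ (b i)⟫_ℂ) {κ : Type*} {e : κ → H} (he : Orthonormal ℂ e)
    (s : Finset κ) : ∑ j ∈ s, re ⟪e j, γ (e j)⟫_ℂ ≤ ∑' i, re ⟪b i, γ (b i)⟫_ℂ := by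
  simp_rw [hγ.re_inner_apply_eq_norm_sqrt_sq] at hs ⊢
  exact (CFC.sqrt_nonneg γ).isSelfAdjoint.sum_norm_apply_sq_le_tsum b hs he s

lemma IsPositive.re_inner_le_of_inner_eq_zero {γ : H →L[ℂ] H} (hγ : γ.IsPositive)
    (b : HilbertBasis ι ℂ H) (hs : Summable fun i => re ⟪b i, γ (b i)⟫_ℂ) {ψ w : H}
    (hψ : ‖ψ‖ = 1) (hw : ⟪ψ, w⟫_ℂ = 0) :
    re ⟪w, γ w⟫_ℂ ≤ (∑' i, re ⟪b i, γ (b i)⟫_ℂ - re ⟪ψ, γ ψ⟫_ℂ) * ‖w‖ ^ 2 := by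
  rcases eq_or_ne w 0 with rfl | hw0
  · simp
  have hc : Orthonormal ℂ ![ψ, (‖w‖⁻¹ : ℂ) • w] := by
    simp [hψ, norm_smul, hw0, inner_smul_right, hw]
  have h := hγ.sum_re_inner_le_tsum b hs hc Finset.univ
  simp only [Fin.sum_univ_two, Matrix.cons_val_zero, Matrix.cons_val_one] at h
  rw [hγ.re_inner_apply_eq_norm_sqrt_sq ((‖w‖⁻¹ : ℂ) • w), map_smul, norm_smul, norm_inv,
    Complex.norm_real, norm_norm, mul_pow, ← hγ.re_inner_apply_eq_norm_sqrt_sq, inv_pow,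
    ← div_eq_inv_mul] at h
  have hw2 : 0 < ‖w‖ ^ 2 := by positivity
  have := (div_le_iff₀ hw2).mp (le_sub_iff_add_le'.mpr h)
  linarith

lemma IsPositive.re_inner_le_tsum {γ : H →L[ℂ] H} (hγ : γ.IsPositive) (b : HilbertBasis ι ℂ H)
    (hs : Summable fun i => re ⟪b i, γ (b i)⟫_ℂ) {ψ : H} (hψ : ‖ψ‖ = 1) :
    re ⟪ψ, γ ψ⟫_ℂ ≤ ∑' i, re ⟪b i, γ (b i)⟫_ℂ := by
  simpa using hγ.sum_re_inner_le_tsum b hs (e := ![ψ]) (by simp [hψ]) Finset.univ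

lemma IsPositive.neg_re_inner_sub_rankOne_le {γ : H →L[ℂ] H} (hγ : γ.IsPositive)
    (b : HilbertBasis ι ℂ H) (hs : Summable fun i => re ⟪b i, γ (b i)⟫_ℂ)
    (htr : ∑' i, re ⟪b i, γ (b i)⟫_ℂ = 1) {ψ : H} (hψ : ‖ψ‖ = 1) (y : H) :
    -re ⟪y, (γ - rankOne ℂ ψ ψ) y⟫_ℂ ≤
      (1 - re ⟪ψ, γ ψ⟫_ℂ + √(1 - re ⟪ψ, γ ψ⟫_ℂ)) * ‖y‖ ^ 2 := by
  rw [sub_apply, inner_sub_right, map_sub, re_inner_rankOne_self_apply,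
    hγ.re_inner_apply_eq_norm_sqrt_sq, neg_sub]
  set p := re ⟪ψ, γ ψ⟫_ℂ
  set D := CFC.sqrt γ
  set α := ⟪ψ, y⟫_ℂ
  set w := y - α • ψ
  have hw : ⟪ψ, w⟫_ℂ = 0 := by
    rw [inner_sub_right, inner_smul_right, inner_self_eq_norm_sq_to_K, hψ]; simp [α]
  have hy : ‖y‖ ^ 2 = ‖α‖ ^ 2 + ‖w‖ ^ 2 := by
    have h := norm_add_sq_eq_norm_sq_add_norm_sq_of_inner_eq_zero (α • ψ) w
      (by rw [inner_smul_left, hw, mul_zero])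
    rw [add_sub_cancel, norm_smul, hψ, mul_one] at h
    rw [sq, sq, sq, h]
  have hDψ : ‖D ψ‖ ^ 2 = p := (hγ.re_inner_apply_eq_norm_sqrt_sq ψ).symm
  have hDw : ‖D w‖ ^ 2 ≤ (1 - p) * ‖w‖ ^ 2 := by
    rw [← hγ.re_inner_apply_eq_norm_sqrt_sq, ← htr]
    exact hγ.re_inner_le_of_inner_eq_zero b hs hψ hw
  have hp1 : p ≤ 1 := htr ▸ hγ.re_inner_le_tsum b hs hψ
  have htri : ‖α‖ * √p - ‖D w‖ ≤ ‖D y‖ := by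
    have h := norm_sub_norm_le (α • D ψ) (D y)
    rw [norm_smul, ← Real.sqrt_sq (norm_nonneg (D ψ)), hDψ, norm_sub_rev, ← map_smul,
      ← map_sub] at h
    linarith
  have hter : ‖D w‖ ≤ √(1 - p) * ‖w‖ := by
    refine (pow_le_pow_iff_left₀ (norm_nonneg _) (by positivity) two_ne_zero).mp ?_
    rwa [mul_pow, Real.sq_sqrt (sub_nonneg.mpr hp1)]
  have hqe : √p ^ 2 + √(1 - p) ^ 2 = 1 := by
    rw [Real.sq_sqrt (hγ.re_inner_nonneg_right ψ), Real.sq_sqrt (sub_nonneg.mpr hp1)]; ring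
  simpa only [hy, Real.sq_sqrt (sub_nonneg.mpr hp1)] using
    sq_sub_sq_le_of_sub_le_of_le (norm_nonneg α) (norm_nonneg w) (norm_nonneg _) (norm_nonneg _)
      (Real.sqrt_nonneg p) (Real.sqrt_nonneg _) hqe htri hter

end ContinuousLinearMap

lemma norm_sq_le_of_negPart_eq_rankOne {A : H →L[ℂ] H} (hA : IsSelfAdjoint A) {v : H}
    (hv : A⁻ = rankOne ℂ v v) {c : ℝ} (hc : 0 ≤ c)
    (hAc : ∀ y, -re ⟪y, A y⟫_ℂ ≤ c * ‖y‖ ^ 2) : ‖v‖ ^ 2 ≤ c := by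
  rcases eq_or_ne v 0 with rfl | hv0
  · simpa using hc
  have hNv : A⁻ v = ((‖v‖ ^ 2 : ℝ) : ℂ) • v := by
    rw [hv, rankOne_apply, inner_self_eq_norm_sq_to_K]; norm_cast
  have hne : ((‖v‖ ^ 2 : ℝ) : ℂ) ≠ 0 := by simpa using hv0
  have hAv : A v = -((‖v‖ ^ 2 : ℝ) : ℂ) • v := by
    have h : A (A⁻ v) = -A⁻ (A⁻ v) := congr($(CFC.mul_negPart A hA) v)
    rw [hNv, map_smul, map_smul, hNv, smul_smul, ← neg_smul, ← mul_neg, ← smul_smul] at h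
    exact smul_right_injective H hne h
  have h := hAc v
  rw [hAv, inner_smul_right, neg_mul, map_neg, neg_neg, RCLike.re_to_complex,
    Complex.re_ofReal_mul, ← RCLike.re_to_complex, inner_self_eq_norm_sq] at h
  have hv2 : 0 < ‖v‖ ^ 2 := by positivity
  nlinarith

lemma absOp_eq_add_two_smul_negPart {A : H →L[ℂ] H} (hA : IsSelfAdjoint A) :
    absOp A = A + 2 • A⁻ := by
  rw [← CFC.abs_sub_self A, add_sub_cancel, CFC.abs_eq_cfc_norm A]
  rfl

lemma traceNormWrt_eq_of_negPart_eq_rankOne (b : HilbertBasis ι ℂ H) {A : H →L[ℂ] H}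
    (hA : IsSelfAdjoint A) {t : ℝ} (ht : HasSum (fun i => re ⟪b i, A (b i)⟫_ℂ) t) {v : H}
    (hv : A⁻ = rankOne ℂ v v) : traceNormWrt b A = t + 2 * ‖v‖ ^ 2 := by
  refine ((ht.add ((b.hasSum_re_inner_rankOne_self v).mul_left 2)).congr_fun fun i => ?_).tsum_eq
  rw [← RCLike.re_to_complex, absOp_eq_add_two_smul_negPart hA, hv, add_apply, inner_add_right,
    map_add, smul_apply, two_smul, inner_add_right, map_add, two_mul]

lemma neg_re_inner_le_norm_sq_of_negPart_eq_rankOne {A : H →L[ℂ] H} (hA : IsSelfAdjoint A)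
    {v : H} (hv : A⁻ = rankOne ℂ v v) {ψ : H} (hψ : ‖ψ‖ = 1) : -re ⟪ψ, A ψ⟫_ℂ ≤ ‖v‖ ^ 2 := by
  calc -re ⟪ψ, A ψ⟫_ℂ ≤ re ⟪ψ, A⁻ ψ⟫_ℂ := neg_re_inner_le_re_inner_negPart hA ψ
    _ = ‖⟪v, ψ⟫_ℂ‖ ^ 2 := by rw [hv, re_inner_rankOne_self_apply]
    _ ≤ ‖v‖ ^ 2 := by
      gcongr
      simpa [hψ] using norm_inner_le_norm (𝕜 := ℂ) v ψ

end

/-- Lemma 4.2 of the paper, abstractly: if `γ ≥ 0` is trace class with trace `1`, `‖ψ‖ = 1`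
and `P = |ψ⟩⟨ψ|`, then `1 − ⟨ψ, γψ⟩ ≤ ‖γ − P‖₁ ≤ 4 √(1 − ⟨ψ, γψ⟩)`. -/
theorem stmt12 {H : Type*} [NormedAddCommGroup H] [InnerProductSpace ℂ H] [CompleteSpace H]
    {ι : Type*} (b : HilbertBasis ι ℂ H)
    (γ P : H →L[ℂ] H) (hpos : γ.IsPositive)
    (hsum : Summable fun i : ι => (inner ℂ (b i) (γ (b i)) : ℂ).re)
    (htrace : ∑' i : ι, (inner ℂ (b i) (γ (b i)) : ℂ).re = 1)
    (ψ : H) (hψ : ‖ψ‖ = 1)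
    (hP : ∀ v : H, P v = (inner ℂ ψ v : ℂ) • ψ) :
    1 - (inner ℂ ψ (γ ψ) : ℂ).re ≤ traceNormWrt b (γ - P) ∧
    traceNormWrt b (γ - P) ≤ 4 * Real.sqrt (1 - (inner ℂ ψ (γ ψ) : ℂ).re) := by
  simp only [← RCLike.re_to_complex] at hsum htrace ⊢
  obtain rfl : P = rankOne ℂ ψ ψ := ext hP
  have hA := hpos.isSelfAdjoint.sub (isPositive_rankOne_self ψ).isSelfAdjoint
  obtain ⟨v, hv⟩ := hpos.exists_negPart_sub_rankOne_eq_rankOne ψ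
  have htrA : HasSum (fun i => re ⟪b i, (γ - rankOne ℂ ψ ψ) (b i)⟫_ℂ) (1 - ‖ψ‖ ^ 2) := by
    simpa only [sub_apply, inner_sub_right, map_sub] using
      (htrace ▸ hsum.hasSum).sub (b.hasSum_re_inner_rankOne_self ψ)
  rw [traceNormWrt_eq_of_negPart_eq_rankOne b hA htrA hv, hψ, one_pow, sub_self, zero_add]
  have hp0 := hpos.re_inner_nonneg_right ψ
  have hp1 : re ⟪ψ, γ ψ⟫_ℂ ≤ 1 := htrace ▸ hpos.re_inner_le_tsum b hsum hψ
  have hlow := neg_re_inner_le_norm_sq_of_negPart_eq_rankOne hA hv hψ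
  rw [sub_apply, inner_sub_right, map_sub, re_inner_rankOne_self_apply, inner_self_eq_norm_sq_to_K,
    hψ, RCLike.ofReal_one, one_pow, norm_one, one_pow] at hlow
  have hup := norm_sq_le_of_negPart_eq_rankOne hA hv (by have := sub_nonneg.mpr hp1; positivity)
    (hpos.neg_re_inner_sub_rankOne_le b hsum htrace hψ)
  have hε := Real.sq_sqrt (sub_nonneg.mpr hp1)
  have hε1 : √(1 - re ⟪ψ, γ ψ⟫_ℂ) ≤ 1 := Real.sqrt_le_one.mpr (by linarith)
  constructor
  · linarith
  · nlinarith [Real.sqrt_nonneg (1 - re ⟪ψ, γ ψ⟫_ℂ)]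
end
end
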